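/- arXiv:math/0209011 — 2 statements merged into one kernel-verified Lean document; each statement's English description precedes it below -/
import Mathlib

section
/- Let R be a commutative Noetherian ring and 0 → F → G → B → 0 a short exact sequence of R-modules with F and G finite free. Let M = coker(G^* → F^*). Then there is an exact sequence 0 → Hom_R(B, F) → Hom_R(B, G) → Hom_R(B, B) → Hom_R(M, M) → 0. -/
/-!
Every endomorphism of `B = G ⧸ φF` lifts, `G` being projective, to a pair `(n, t)` of
endomorphisms of `G` and `F` with `n ∘ φ = φ ∘ t`; the transposed pair `(t*, n*)` is compatible
with `φ*` and so induces an endomorphism of `M`. By reflexivity every pair compatible with `φ*`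
is such a transpose, and since `G*` and `F*` are projective every endomorphism of `M` lifts to
one. The pair induces `0` on `M` iff the image of `t*` lies in that of `φ*`, i.e. iff
`t = k ∘ φ` for some `k : G → F`; as `φ` is injective, this is exactly the condition that the
induced endomorphism of `B` factors through `G → B`. So the map on pairs descends to a
surjection `End B → End M` whose kernel is the image of `Hom(B, G)`.
-/

open LinearMap Module

namespace LinearMap

variable {R : Type*} [CommRing R] {M N P : Type*} [AddCommGroup M] [Module R M]
  [AddCommGroup N] [Module R N] [AddCommGroup P] [Module R P]

theorem range_le_iff_mkQ_comp_eq_zero {f : M →ₗ[R] N} {p : Submodule R N} :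
    range f ≤ p ↔ p.mkQ ∘ₗ f = 0 := by
  rw [← range_le_ker_iff, Submodule.ker_mkQ]

theorem exists_comp_eq_of_range_le_of_projective [Projective R P] {f : P →ₗ[R] N}
    {ψ : M →ₗ[R] N} (h : range f ≤ range ψ) : ∃ k : P →ₗ[R] M, ψ ∘ₗ k = f := by
  obtain ⟨k, hk⟩ := projective_lifting_property ψ.rangeRestrict
    (f.codRestrict _ fun x ↦ h ⟨x, rfl⟩) ψ.surjective_rangeRestrict
  exact ⟨k, ext fun x ↦ congrArg Subtype.val (congr($hk x))⟩

theorem exists_comp_eq_of_range_le_of_injective {f : P →ₗ[R] N} {ψ : M →ₗ[R] N}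
    (hψ : Function.Injective ψ) (h : range f ≤ range ψ) : ∃ k : P →ₗ[R] M, ψ ∘ₗ k = f :=
  ⟨(LinearEquiv.ofInjective ψ hψ).symm.toLinearMap ∘ₗ f.codRestrict _ fun x ↦ h ⟨x, rfl⟩,
    ext fun x ↦ by simp [← LinearEquiv.ofInjective_apply ψ (h := hψ)]⟩

theorem exists_comp_eq_of_surjective {π : P →ₗ[R] M} (hπ : Function.Surjective π)
    {f : P →ₗ[R] N} (h : ker π ≤ ker f) : ∃ g : M →ₗ[R] N, g ∘ₗ π = f :=
  ⟨(ker π).liftQ f h ∘ₗ (π.quotKerEquivOfSurjective hπ).symm.toLinearMap, ext fun x ↦ by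
    simp [quotKerEquivOfSurjective_symm_apply]⟩

theorem exact_llcomp_of_exact_of_injective {f : M →ₗ[R] N} {g : N →ₗ[R] P}
    (hfg : Function.Exact f g) (hf : Function.Injective f) (Q : Type*) [AddCommGroup Q]
    [Module R Q] :
    Function.Exact (fun h : Q →ₗ[R] M ↦ f ∘ₗ h) (fun h : Q →ₗ[R] N ↦ g ∘ₗ h) := by
  intro h
  refine ⟨fun hh ↦ exists_comp_eq_of_range_le_of_injective hf ?_, ?_⟩
  · rw [← hfg.linearMap_ker_eq, range_le_ker_iff]
    exact hh
  · rintro ⟨k, rfl⟩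
    exact congrArg (· ∘ₗ k) hfg.linearMap_comp_eq_zero

end LinearMap

namespace Module

variable {R : Type*} [CommRing R]

theorem exists_dualMap_eq {X Y : Type*} [AddCommGroup X] [Module R X] [AddCommGroup Y]
    [Module R Y] [IsReflexive R X] (K : Dual R X →ₗ[R] Dual R Y) :
    ∃ k : Y →ₗ[R] X, k.dualMap = K :=
  ⟨(evalEquiv R X).symm.toLinearMap ∘ₗ K.dualMap ∘ₗ Dual.eval R Y, by ext; simp⟩

theorem dualMap_injective_of_isReflexive {M N : Type*} [AddCommGroup M] [Module R M]
    [AddCommGroup N] [Module R N] [IsReflexive R N] :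
    Function.Injective (dualMap : (M →ₗ[R] N) → Dual R N →ₗ[R] Dual R M) := fun _ _ h ↦
  ext fun x ↦ (bijective_dual_eval R N).injective (ext fun β ↦ congr($h β x))

theorem exists_comp_eq_iff_range_dualMap_le {A C X : Type*} [AddCommGroup A] [Module R A]
    [AddCommGroup C] [Module R C] [AddCommGroup X] [Module R X] [IsReflexive R X]
    [Projective R (Dual R X)] (ψ : A →ₗ[R] C) (t : A →ₗ[R] X) :
    (∃ k : C →ₗ[R] X, k ∘ₗ ψ = t) ↔ range t.dualMap ≤ range ψ.dualMap := by
  constructor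
  · rintro ⟨k, rfl⟩ _ ⟨β, rfl⟩
    exact ⟨k.dualMap β, rfl⟩
  · intro h
    obtain ⟨K, hK⟩ := exists_comp_eq_of_range_le_of_projective h
    obtain ⟨k, rfl⟩ := exists_dualMap_eq K
    exact ⟨k, dualMap_injective_of_isReflexive hK⟩

end Module

namespace LinearMap

variable {R : Type*} [CommRing R] {A C : Type*} [AddCommGroup A] [Module R A]
  [AddCommGroup C] [Module R C] (ψ : A →ₗ[R] C)

def compatiblePairs : Submodule R ((C →ₗ[R] C) × (A →ₗ[R] A)) where
  carrier := {p | p.1 ∘ₗ ψ = ψ ∘ₗ p.2}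
  add_mem' {p q} hp hq := by
    simp only [Set.mem_ofPred_eq, Prod.fst_add, Prod.snd_add, add_comp, comp_add] at *
    rw [hp, hq]
  zero_mem' := by simp
  smul_mem' r p hp := by
    simp only [Set.mem_ofPred_eq, Prod.smul_fst, Prod.smul_snd, smul_comp, comp_smul] at *
    rw [hp]

variable {ψ}

theorem mem_compatiblePairs {p : (C →ₗ[R] C) × (A →ₗ[R] A)} :
    p ∈ compatiblePairs ψ ↔ p.1 ∘ₗ ψ = ψ ∘ₗ p.2 :=
  Iff.rfl

theorem compatiblePairs.fst_mem_compatibleMaps (p : compatiblePairs ψ) :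
    (p : (C →ₗ[R] C) × (A →ₗ[R] A)).1 ∈ (range ψ).compatibleMaps (range ψ) := by
  rintro _ ⟨x, rfl⟩
  exact ⟨p.1.2 x, congr($(p.2.symm) x)⟩

variable (ψ) in
def cokernelEnd : compatiblePairs ψ →ₗ[R] (C ⧸ range ψ) →ₗ[R] (C ⧸ range ψ) :=
  Submodule.mapQLinear _ _ ∘ₗ
    codRestrict _ (fst _ _ _ ∘ₗ (compatiblePairs ψ).subtype)
      compatiblePairs.fst_mem_compatibleMaps

@[simp]
theorem cokernelEnd_mk (p : compatiblePairs ψ) (x : C) :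
    cokernelEnd ψ p (Submodule.Quotient.mk x) = Submodule.Quotient.mk (p.1.1 x) :=
  rfl

theorem cokernelEnd_eq_zero_iff (p : compatiblePairs ψ) :
    cokernelEnd ψ p = 0 ↔ range p.1.1 ≤ range ψ := by
  rw [range_le_iff_mkQ_comp_eq_zero]
  constructor <;> intro h <;> ext x
  · exact congr($h (Submodule.Quotient.mk x))
  · exact congr($h x)

variable (ψ) in
theorem cokernelEnd_surjective [Projective R A] [Projective R C] :
    Function.Surjective (cokernelEnd ψ) := by
  intro f
  obtain ⟨c, hc⟩ := projective_lifting_property (range ψ).mkQ (f ∘ₗ (range ψ).mkQ)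
    (Submodule.mkQ_surjective _)
  have hcψ : range (c ∘ₗ ψ) ≤ range ψ := by
    rw [range_le_iff_mkQ_comp_eq_zero, ← comp_assoc, hc, comp_assoc, range_mkQ_comp, comp_zero]
  obtain ⟨a, ha⟩ := exists_comp_eq_of_range_le_of_projective hcψ
  exact ⟨⟨(c, a), ha.symm⟩, by ext x; exact congr($hc x)⟩

theorem exists_mkQ_comp_eq_cokernelEnd_iff (hψ : Function.Injective ψ) (p : compatiblePairs ψ) :
    (∃ ℓ : (C ⧸ range ψ) →ₗ[R] C, (range ψ).mkQ ∘ₗ ℓ = cokernelEnd ψ p) ↔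
      ∃ k : C →ₗ[R] A, k ∘ₗ ψ = p.1.2 := by
  obtain ⟨⟨c, a⟩, hp : c ∘ₗ ψ = ψ ∘ₗ a⟩ := p
  constructor
  · rintro ⟨ℓ, hℓ⟩
    have hrange : range (c - ℓ ∘ₗ (range ψ).mkQ) ≤ range ψ := by
      rw [range_le_iff_mkQ_comp_eq_zero, comp_sub, ← comp_assoc, hℓ, sub_eq_zero]
      ext x; rfl
    obtain ⟨k, hk⟩ := exists_comp_eq_of_range_le_of_injective hψ hrange
    refine ⟨k, (cancel_left hψ).mp ?_⟩
    rw [← comp_assoc, hk, sub_comp, comp_assoc, range_mkQ_comp, comp_zero, sub_zero, hp]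
  · rintro ⟨k, rfl⟩
    have hker : range ψ ≤ ker (c - ψ ∘ₗ k) := by
      rw [range_le_ker_iff, sub_comp, hp, comp_assoc, sub_self]
    refine ⟨(range ψ).liftQ _ hker, ?_⟩
    ext x
    simp

variable (ψ) in
def dualPair : compatiblePairs ψ →ₗ[R] compatiblePairs ψ.dualMap where
  toFun p := ⟨(p.1.2.dualMap, p.1.1.dualMap), by
    simp only [mem_compatiblePairs, dualMap_comp_dualMap, p.2.symm]⟩
  map_add' _ _ := by ext <;> simp
  map_smul' _ _ := by ext <;> simp

theorem dualPair_surjective [IsReflexive R A] [IsReflexive R C] :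
    Function.Surjective (dualPair ψ) := by
  rintro ⟨⟨c', a'⟩, hp⟩
  obtain ⟨a, rfl⟩ := exists_dualMap_eq c'
  obtain ⟨c, rfl⟩ := exists_dualMap_eq a'
  refine ⟨⟨(c, a), dualMap_injective_of_isReflexive ?_⟩, rfl⟩
  rw [← dualMap_comp_dualMap, ← dualMap_comp_dualMap]
  exact hp.symm

end LinearMap

theorem stmt1_general (R : Type) [CommRing R]
    (F G : Type) [AddCommGroup F] [Module R F] [Module.Finite R F] [Module.Free R F]
    [AddCommGroup G] [Module R G] [Module.Finite R G] [Module.Free R G]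
    (φ : F →ₗ[R] G) (hφ : Function.Injective φ) :
    ∃ (g : ((G ⧸ LinearMap.range φ) →ₗ[R] (G ⧸ LinearMap.range φ)) →ₗ[R]
        (((Module.Dual R F) ⧸ LinearMap.range φ.dualMap) →ₗ[R]
          ((Module.Dual R F) ⧸ LinearMap.range φ.dualMap))),
      Function.Injective
        ((LinearMap.llcomp (σ₁₂ := RingHom.id R) (σ₁₃ := RingHom.id R) (σ₂₃ := RingHom.id R) R (G ⧸ LinearMap.range φ) F G) φ) ∧
      Function.Exact
        ((LinearMap.llcomp (σ₁₂ := RingHom.id R) (σ₁₃ := RingHom.id R) (σ₂₃ := RingHom.id R) R (G ⧸ LinearMap.range φ) F G) φ)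
        ((LinearMap.llcomp (σ₁₂ := RingHom.id R) (σ₁₃ := RingHom.id R) (σ₂₃ := RingHom.id R) R (G ⧸ LinearMap.range φ) G (G ⧸ LinearMap.range φ))
          (LinearMap.range φ).mkQ) ∧
      Function.Exact
        ((LinearMap.llcomp (σ₁₂ := RingHom.id R) (σ₁₃ := RingHom.id R) (σ₂₃ := RingHom.id R) R (G ⧸ LinearMap.range φ) G (G ⧸ LinearMap.range φ))
          (LinearMap.range φ).mkQ) g ∧
      Function.Surjective g := by
  set Ψ := cokernelEnd φ.dualMap ∘ₗ dualPair φ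
  have hΨ (p : compatiblePairs φ) :
      Ψ p = 0 ↔ ∃ ℓ : (G ⧸ range φ) →ₗ[R] G, (range φ).mkQ ∘ₗ ℓ = cokernelEnd φ p := by
    rw [exists_mkQ_comp_eq_cokernelEnd_iff hφ, exists_comp_eq_iff_range_dualMap_le]
    exact cokernelEnd_eq_zero_iff _
  obtain ⟨g, hg⟩ := exists_comp_eq_of_surjective (cokernelEnd_surjective φ) (f := Ψ)
    fun p hp ↦ (hΨ p).mpr ⟨0, by rw [comp_zero, mem_ker.mp hp]⟩
  refine ⟨g, fun _ _ h ↦ (cancel_left hφ).mp h,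
    exact_llcomp_of_exact_of_injective (exact_map_mkQ_range φ) hφ _, fun f ↦ ?_, fun u ↦ ?_⟩
  · obtain ⟨p, rfl⟩ := cokernelEnd_surjective φ f
    rw [← comp_apply g, hg]
    exact hΨ p
  · obtain ⟨p, rfl⟩ := ((cokernelEnd_surjective _).comp dualPair_surjective) u
    exact ⟨cokernelEnd φ p, congr($hg p)⟩

/-- Let `R` be a commutative Noetherian ring and
`0 → F → G → B → 0` a short exact sequence of `R`-modules with `F`, `G` finite free
(`B = G ⧸ range φ`).  Let `M = coker (φ* : G* → F*)`.  Then there is an exact sequence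
`0 → Hom_R(B, F) → Hom_R(B, G) → Hom_R(B, B) → Hom_R(M, M) → 0`, where the first two maps
are postcomposition with `φ` and with the projection `G → B`, and the last map is the one
induced by dualization. -/
theorem stmt1 (R : Type) [CommRing R] [IsNoetherianRing R]
    (F G : Type) [AddCommGroup F] [Module R F] [Module.Finite R F] [Module.Free R F]
    [AddCommGroup G] [Module R G] [Module.Finite R G] [Module.Free R G]
    (φ : F →ₗ[R] G) (hφ : Function.Injective φ) :
    ∃ (g : ((G ⧸ LinearMap.range φ) →ₗ[R] (G ⧸ LinearMap.range φ)) →ₗ[R]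
        (((Module.Dual R F) ⧸ LinearMap.range φ.dualMap) →ₗ[R]
          ((Module.Dual R F) ⧸ LinearMap.range φ.dualMap))),
      Function.Injective
        ((LinearMap.llcomp (σ₁₂ := RingHom.id R) (σ₁₃ := RingHom.id R) (σ₂₃ := RingHom.id R) R (G ⧸ LinearMap.range φ) F G) φ) ∧
      Function.Exact
        ((LinearMap.llcomp (σ₁₂ := RingHom.id R) (σ₁₃ := RingHom.id R) (σ₂₃ := RingHom.id R) R (G ⧸ LinearMap.range φ) F G) φ)
        ((LinearMap.llcomp (σ₁₂ := RingHom.id R) (σ₁₃ := RingHom.id R) (σ₂₃ := RingHom.id R) R (G ⧸ LinearMap.range φ) G (G ⧸ LinearMap.range φ))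
          (LinearMap.range φ).mkQ) ∧
      Function.Exact
        ((LinearMap.llcomp (σ₁₂ := RingHom.id R) (σ₁₃ := RingHom.id R) (σ₂₃ := RingHom.id R) R (G ⧸ LinearMap.range φ) G (G ⧸ LinearMap.range φ))
          (LinearMap.range φ).mkQ) g ∧
      Function.Surjective g :=
  stmt1_general R F G φ hφ
end

section
/- Let D be a Cohen–Macaulay graded quotient of R = k[x_0,…,x_N] of codimension 2 with minimal free resolution 0 → F → G → I_D(ℓ) → 0. Then there is an exact sequence 0 → K_D(N+1)^* → F(−ℓ) ⊗_R D → G(−ℓ) ⊗_R D → I_D/I_D² → 0, where K_D = Ext²_R(D, R)(−N−1) is the canonical module and (·)^* denotes Hom_D(·, D). -/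
/-!
For finite free `F`, the canonical isomorphism `F ⊗ N ≃ Hom(F^*, N)` is natural in `F`, so
`α ⊗ N` becomes precomposition with `α^*`. Left exactness of `Hom(-, N)` applied to
`G^* → F^* → coker α^* → 0` then identifies `ker (α ⊗ N)` with `Hom(coker α^*, N)`.
The right end is right exactness of `- ⊗ R/I` applied to `F → G → I → 0`,
together with `I ⊗ R/I ≃ I/I²`.
-/

open TensorProduct LinearMap

section TensorDualHom

variable (R : Type*) [CommRing R]

noncomputable def tensorEquivDualHom (M N : Type*) [AddCommGroup M] [AddCommGroup N]
    [Module R M] [Module R N] [Module.Finite R M] [Module.Free R M] :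
    M ⊗[R] N ≃ₗ[R] (Module.Dual R M →ₗ[R] N) :=
  TensorProduct.congr (Module.evalEquiv R M) (LinearEquiv.refl R N) ≪≫ₗ
    dualTensorHomEquiv R (Module.Dual R M) N

variable {R} {F G N : Type*} [AddCommGroup F] [Module R F] [Module.Finite R F] [Module.Free R F]
  [AddCommGroup G] [Module R G] [AddCommGroup N] [Module R N]

lemma tensorEquivDualHom_tmul (x : F) (n : N) (f : Module.Dual R F) :
    tensorEquivDualHom R F N (x ⊗ₜ n) f = f x • n := by
  simp [tensorEquivDualHom, Module.evalEquiv]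

lemma tensorEquivDualHom_rTensor [Module.Finite R G] [Module.Free R G] (α : F →ₗ[R] G)
    (t : F ⊗[R] N) :
    tensorEquivDualHom R G N (α.rTensor N t) = tensorEquivDualHom R F N t ∘ₗ α.dualMap := by
  induction t with
  | zero => simp
  | add a b ha hb => simp only [map_add, ha, hb, add_comp]
  | tmul x n => ext g; simp [tensorEquivDualHom_tmul, dualMap_apply]

variable (N) in
noncomputable def homCokerDualToTensor (α : F →ₗ[R] G) :
    ((Module.Dual R F ⧸ range α.dualMap) →ₗ[R] N) →ₗ[R] F ⊗[R] N :=
  (tensorEquivDualHom R F N).symm.toLinearMap ∘ₗ lcomp R N (range α.dualMap).mkQ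

lemma homCokerDualToTensor_injective (α : F →ₗ[R] G) :
    Function.Injective (homCokerDualToTensor N α) :=
  (tensorEquivDualHom R F N).symm.injective.comp
    (lcomp_injective_of_surjective _ (Submodule.mkQ_surjective _))

lemma exact_homCokerDualToTensor_rTensor [Module.Finite R G] [Module.Free R G]
    (α : F →ₗ[R] G) :
    Function.Exact (homCokerDualToTensor N α) (α.rTensor N) := by
  have hHom : Function.Exact (lcomp R N (range α.dualMap).mkQ) (lcomp R N α.dualMap) :=
    exact_lcomp_of_exact_of_surjective N (exact_map_mkQ_range _) (Submodule.mkQ_surjective _)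
  refine Function.Exact.of_ladder_linearEquiv_of_exact (e₁ := LinearEquiv.refl R _)
    (e₂ := (tensorEquivDualHom R F N).symm) (e₃ := (tensorEquivDualHom R G N).symm)
    rfl ?_ hHom
  ext φ : 1
  apply (tensorEquivDualHom R G N).injective
  simp [tensorEquivDualHom_rTensor, lcomp_apply']

end TensorDualHom

theorem stmt7_general (k : Type) [Field k] (N : ℕ)
    (I : Ideal (MvPolynomial (Fin (N + 1)) k))
    (F G : Type) [AddCommGroup F] [Module (MvPolynomial (Fin (N + 1)) k) F]
    [Module.Finite (MvPolynomial (Fin (N + 1)) k) F]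
    [Module.Free (MvPolynomial (Fin (N + 1)) k) F]
    [AddCommGroup G] [Module (MvPolynomial (Fin (N + 1)) k) G]
    [Module.Finite (MvPolynomial (Fin (N + 1)) k) G]
    [Module.Free (MvPolynomial (Fin (N + 1)) k) G]
    (α : F →ₗ[MvPolynomial (Fin (N + 1)) k] G)
    (β : G →ₗ[MvPolynomial (Fin (N + 1)) k] I)
    (hβ : Function.Surjective β) (hexact : Function.Exact α β) :
    ∃ (g₀ : (((Module.Dual (MvPolynomial (Fin (N + 1)) k) F) ⧸
          LinearMap.range α.dualMap) →ₗ[MvPolynomial (Fin (N + 1)) k]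
          ((MvPolynomial (Fin (N + 1)) k) ⧸ I)) →ₗ[MvPolynomial (Fin (N + 1)) k]
        (F ⊗[MvPolynomial (Fin (N + 1)) k] ((MvPolynomial (Fin (N + 1)) k) ⧸ I)))
      (g₃ : (G ⊗[MvPolynomial (Fin (N + 1)) k] ((MvPolynomial (Fin (N + 1)) k) ⧸ I))
          →ₗ[MvPolynomial (Fin (N + 1)) k] I.Cotangent),
      Function.Injective g₀ ∧
      Function.Exact g₀ (α.rTensor ((MvPolynomial (Fin (N + 1)) k) ⧸ I)) ∧
      Function.Exact (α.rTensor ((MvPolynomial (Fin (N + 1)) k) ⧸ I)) g₃ ∧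
      Function.Surjective g₃ := by
  let e : I ⊗[MvPolynomial (Fin (N + 1)) k] (MvPolynomial (Fin (N + 1)) k ⧸ I) ≃ₗ[_]
      I.Cotangent := tensorQuotEquivQuotSMul I I
  refine ⟨homCokerDualToTensor _ α, e.toLinearMap ∘ₗ β.rTensor _,
    homCokerDualToTensor_injective α, exact_homCokerDualToTensor_rTensor α, ?_, ?_⟩
  · exact e.postcomp_exact_iff_exact.mpr (rTensor_exact _ hexact hβ)
  · exact e.surjective.comp (rTensor_surjective _ hβ)

/-- Let `D = R/I_D` be a Cohen–Macaulay codimension 2 graded quotient of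
`R = k[x_0,…,x_N]` with Hilbert–Burch resolution `0 → F → G → I_D(ℓ) → 0`.  Then there is
an exact sequence `0 → K_D(N+1)^* → F(−ℓ) ⊗ D → G(−ℓ) ⊗ D → I_D/I_D² → 0` (twists
suppressed), where `K_D(N+1) ≅ Ext¹_R(I_D, R)` is realized as `coker(G^* → F^*)` and
`(·)^* = Hom_D(·, D)`. -/
theorem stmt7 (k : Type) [Field k] (N : ℕ) (hN : 2 ≤ N)
    (I : Ideal (MvPolynomial (Fin (N + 1)) k))
    (F G : Type) [AddCommGroup F] [Module (MvPolynomial (Fin (N + 1)) k) F]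
    [Module.Finite (MvPolynomial (Fin (N + 1)) k) F]
    [Module.Free (MvPolynomial (Fin (N + 1)) k) F]
    [AddCommGroup G] [Module (MvPolynomial (Fin (N + 1)) k) G]
    [Module.Finite (MvPolynomial (Fin (N + 1)) k) G]
    [Module.Free (MvPolynomial (Fin (N + 1)) k) G]
    (α : F →ₗ[MvPolynomial (Fin (N + 1)) k] G)
    (β : G →ₗ[MvPolynomial (Fin (N + 1)) k] I)
    (hα : Function.Injective α) (hβ : Function.Surjective β) (hexact : Function.Exact α β)
    -- codimension 2
    (hcodim : ringKrullDim ((MvPolynomial (Fin (N + 1)) k) ⧸ I) = ((N - 1 : ℕ) : ℕ)) :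
    ∃ (g₀ : (((Module.Dual (MvPolynomial (Fin (N + 1)) k) F) ⧸
          LinearMap.range α.dualMap) →ₗ[MvPolynomial (Fin (N + 1)) k]
          ((MvPolynomial (Fin (N + 1)) k) ⧸ I)) →ₗ[MvPolynomial (Fin (N + 1)) k]
        (F ⊗[MvPolynomial (Fin (N + 1)) k] ((MvPolynomial (Fin (N + 1)) k) ⧸ I)))
      (g₃ : (G ⊗[MvPolynomial (Fin (N + 1)) k] ((MvPolynomial (Fin (N + 1)) k) ⧸ I))
          →ₗ[MvPolynomial (Fin (N + 1)) k] I.Cotangent),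
      Function.Injective g₀ ∧
      Function.Exact g₀ (α.rTensor ((MvPolynomial (Fin (N + 1)) k) ⧸ I)) ∧
      Function.Exact (α.rTensor ((MvPolynomial (Fin (N + 1)) k) ⧸ I)) g₃ ∧
      Function.Surjective g₃ :=
  stmt7_general k N I F G α β hβ hexact
end
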